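/- No-cloning theorem: there is no linear operator C on H ⊗ H (H a complex Hilbert space of dimension at least 2) such that C(ψ ⊗ e) = ψ ⊗ ψ for all unit vectors ψ, where e is a fixed state. Equivalently, if a linear map satisfies C(ψ ⊗ e) = ψ ⊗ ψ for two linearly independent unit vectors ψ, σ, then it fails for their normalized sum. -/

import Mathlib

/-!
Linearity forces `C ((ψ + σ) ⊗ e) = ψ ⊗ ψ + σ ⊗ σ`, whereas cloning `ψ + σ` would produce
`(ψ + σ) ⊗ (ψ + σ)`, which also has a `ψ ⊗ σ` component. For orthonormal `ψ, σ` the functional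
`x ⊗ y ↦ ⟪ψ, x⟫ ⟪σ, y⟫` detects that component, so no multiple of `ψ ⊗ ψ + σ ⊗ σ` can be a nonzero
multiple of `(ψ + σ) ⊗ (ψ + σ)`; hence the normalized sum of `ψ` and `σ` is not cloned.
-/

open TensorProduct

theorem TensorProduct.eq_zero_of_smul_tmul_self_add_eq_smul {R M : Type*} [CommRing R]
    [AddCommGroup M] [Module R M] {x y : M} {f g : Module.Dual R M}
    (hfx : f x = 1) (hfy : f y = 0) (hgx : g x = 0) (hgy : g y = 1) {a b : R}
    (h : a • (x ⊗ₜ[R] x + y ⊗ₜ[R] y) = b • ((x + y) ⊗ₜ[R] (x + y))) : b = 0 := by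
  have := congrArg (dualDistrib R M M (f ⊗ₜ g)) h
  simpa [dualDistrib_apply, hfx, hfy, hgx, hgy] using this.symm

theorem exists_orthonormal_pair_of_two_le_finrank {𝕜 E : Type*} [RCLike 𝕜]
    [NormedAddCommGroup E] [InnerProductSpace 𝕜 E] (h : 2 ≤ Module.finrank 𝕜 E) :
    ∃ ψ σ : E, Orthonormal 𝕜 ![ψ, σ] := by
  have := Module.finite_of_finrank_pos (lt_of_lt_of_le two_pos h)
  let b := stdOrthonormalBasis 𝕜 E
  have hv : Orthonormal 𝕜 (b ∘ Fin.castLE h) := b.orthonormal.comp _ (Fin.castLE_injective h)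
  refine ⟨b (Fin.castLE h 0), b (Fin.castLE h 1), ?_⟩
  convert hv using 1
  funext i
  fin_cases i <;> rfl

theorem no_cloning_general {H : Type*} [NormedAddCommGroup H] [InnerProductSpace ℂ H]
    (hdim : 2 ≤ Module.finrank ℂ H) (e : H) :
    ¬ ∃ C : H ⊗[ℂ] H →ₗ[ℂ] H ⊗[ℂ] H,
      ∀ ψ : H, ‖ψ‖ = 1 → C (ψ ⊗ₜ[ℂ] e) = ψ ⊗ₜ[ℂ] ψ := by
  rintro ⟨C, hC⟩
  obtain ⟨ψ, σ, hon⟩ := exists_orthonormal_pair_of_two_le_finrank hdim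
  have hψ : ‖ψ‖ = 1 := hon.1 0
  have hσ : ‖σ‖ = 1 := hon.1 1
  have hsum : ψ + σ ≠ 0 := by
    simpa using (LinearIndependent.pair_iff.mp hon.linearIndependent 1 1)
  set c : ℂ := (‖ψ + σ‖ : ℂ)⁻¹
  have hφ : ‖c • (ψ + σ)‖ = 1 := norm_smul_inv_norm (𝕜 := ℂ) hsum
  have hclone : c • (ψ ⊗ₜ[ℂ] ψ + σ ⊗ₜ[ℂ] σ) = (c * c) • ((ψ + σ) ⊗ₜ[ℂ] (ψ + σ)) := by
    rw [← hC ψ hψ, ← hC σ hσ, ← map_add, ← add_tmul, ← map_smul, smul_tmul', hC _ hφ,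
      smul_tmul_smul]
  have hinner := orthonormal_iff_ite.mp hon
  have hc : c * c = 0 :=
    eq_zero_of_smul_tmul_self_add_eq_smul (f := innerₛₗ ℂ ψ) (g := innerₛₗ ℂ σ)
      (by simpa using hinner 0 0) (by simpa using hinner 0 1) (by simpa using hinner 1 0)
      (by simpa using hinner 1 1) hclone
  simp [mul_self_eq_zero.mp hc] at hφ

theorem no_cloning {H : Type*} [NormedAddCommGroup H] [InnerProductSpace ℂ H]
    [FiniteDimensional ℂ H] (hdim : 2 ≤ Module.finrank ℂ H) (e : H) :
    ¬ ∃ C : H ⊗[ℂ] H →ₗ[ℂ] H ⊗[ℂ] H,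
      ∀ ψ : H, ‖ψ‖ = 1 → C (ψ ⊗ₜ[ℂ] e) = ψ ⊗ₜ[ℂ] ψ :=
  no_cloning_general hdim e
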